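/- arXiv:1911.11363 — 2 statements merged into one kernel-verified Lean document; each statement's English description precedes it below -/
import Mathlib

section
/- Suppose F: ℝ^p → ℝ is differentiable, β-smooth, and satisfies the expected-curvature condition: at each step t, E[⟨∇F(x_t), x_t − x*⟩] ≥ ν·E[‖x_t − x*‖²] for some ν > 0, where x* minimizes F and also ⟨∇F(x), x − x*⟩ ≥ (1/β)‖∇F(x)‖² for all x. Then the noisy gradient descent iterates x_{t+1} = x_t − η(∇F(x_t) + z_t) with step size η ≤ 1/β and z_t ∼ N(0, σ_t²I_p) independent of x_t satisfy E[‖x_{t+1} − x*‖²] ≤ (1 − ην)·E[‖x_t − x*‖²] + p·η²·σ_t². -/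
/-!
Write `w = x_t - x*` and `g = ∇F(x_t)`, so that `x_{t+1} - x* = (w - η g) - η z_t`. Since `z_t` is
centred and independent of `x_t`, the cross term has mean zero and `E‖z_t‖² = p σ_t²`, whence
`E‖x_{t+1} - x*‖² = E‖w - η g‖² + η² p σ_t²`. Pointwise, co-coercivity and `η ≤ 1/β` give
`η² ‖g‖² ≤ η ⟪g, w⟫`, so `‖w - η g‖² ≤ ‖w‖² - η ⟪g, w⟫`; the expected-curvature condition then
bounds `E⟪g, w⟫` below by `ν E‖w‖²`.
-/

open MeasureTheory ProbabilityTheory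

/-- `z` is a centered Gaussian vector in `ℝ^p` with covariance `v • I_p`:
its coordinates are independent real Gaussians `N(0, v)`. -/
def IsGaussianVec {Ω : Type*} [MeasurableSpace Ω] (P : Measure Ω) {p : ℕ}
    (z : Ω → EuclideanSpace ℝ (Fin p)) (v : NNReal) : Prop :=
  (∀ i, Measure.map (fun ω => z ω i) P = gaussianReal 0 v) ∧
    iIndepFun (fun i ω => z ω i) P

open scoped NNReal ENNReal Gradient

theorem measurable_gradient {E : Type*} [NormedAddCommGroup E] [InnerProductSpace ℝ E]
    [CompleteSpace E] [MeasurableSpace E] [BorelSpace E] (f : E → ℝ) : Measurable (∇ f) :=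
  (InnerProductSpace.toDual ℝ E).symm.continuous.measurable.comp (measurable_fderiv ℝ f)

section Expansion

variable {E : Type*} [NormedAddCommGroup E] [InnerProductSpace ℝ E]

theorem norm_sub_smul_sq (w g : E) (η : ℝ) :
    ‖w - η • g‖ ^ 2 = ‖w‖ ^ 2 - 2 * η * inner ℝ g w + η ^ 2 * ‖g‖ ^ 2 := by
  rw [norm_sub_sq_real, real_inner_smul_right, norm_smul, mul_pow, Real.norm_eq_abs, sq_abs,
    real_inner_comm]
  ring

theorem norm_sub_smul_sq_le_of_inner_ge {β η : ℝ} {w g : E} (hη : 0 ≤ η) (hηβ : η ≤ 1 / β)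
    (hg : 1 / β * ‖g‖ ^ 2 ≤ inner ℝ g w) :
    ‖w - η • g‖ ^ 2 ≤ ‖w‖ ^ 2 - η * inner ℝ g w := by
  have hηg : η * ‖g‖ ^ 2 ≤ inner ℝ g w :=
    (mul_le_mul_of_nonneg_right hηβ (sq_nonneg _)).trans hg
  rw [norm_sub_smul_sq]
  linarith [mul_le_mul_of_nonneg_left hηg hη]

end Expansion

namespace ProbabilityTheory.HasLaw

variable {Ω : Type*} [MeasurableSpace Ω] {P : Measure Ω} {X : Ω → ℝ} {μ : ℝ} {v : ℝ≥0}

theorem memLp_of_gaussianReal (hX : HasLaw X (gaussianReal μ v) P) {q : ℝ≥0∞} (hq : q ≠ ⊤) :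
    MemLp X q P :=
  (memLp_map_measure_iff aestronglyMeasurable_id hX.aemeasurable).1
    (hX.map_eq ▸ memLp_id_gaussianReal' q hq)

theorem integral_sq_of_gaussianReal (hX : HasLaw X (gaussianReal μ v) P) :
    ∫ ω, X ω ^ 2 ∂P = μ ^ 2 + v := by
  have := hX.isProbabilityMeasure
  have hvar := variance_eq_sub (hX.memLp_of_gaussianReal (q := 2) (by simp))
  rw [hX.variance_eq, variance_id_gaussianReal, hX.integral_eq, integral_id_gaussianReal] at hvar
  simp only [Pi.pow_apply] at hvar
  linarith

end ProbabilityTheory.HasLaw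

namespace IsGaussianVec

variable {Ω : Type*} [MeasurableSpace Ω] {P : Measure Ω} {p : ℕ}
  {Z : Ω → EuclideanSpace ℝ (Fin p)} {v : ℝ≥0}

theorem hasLaw_apply (hZ : IsGaussianVec P Z v) (hZm : Measurable Z) (i : Fin p) :
    HasLaw (fun ω => Z ω i) (gaussianReal 0 v) P :=
  ⟨((EuclideanSpace.proj i).continuous.measurable.comp hZm).aemeasurable, hZ.1 i⟩

theorem integrable_norm_sq (hZ : IsGaussianVec P Z v) (hZm : Measurable Z) :
    Integrable (fun ω => ‖Z ω‖ ^ 2) P := by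
  simp_rw [EuclideanSpace.norm_sq_eq, Real.norm_eq_abs, sq_abs]
  exact integrable_finsetSum _ fun i _ =>
    ((hZ.hasLaw_apply hZm i).memLp_of_gaussianReal (q := 2) (by simp)).integrable_sq

theorem integral_norm_sq (hZ : IsGaussianVec P Z v) (hZm : Measurable Z) :
    ∫ ω, ‖Z ω‖ ^ 2 ∂P = p * v := by
  simp_rw [EuclideanSpace.norm_sq_eq, Real.norm_eq_abs, sq_abs]
  rw [integral_finsetSum _ fun i _ =>
    ((hZ.hasLaw_apply hZm i).memLp_of_gaussianReal (q := 2) (by simp)).integrable_sq]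
  simp [(hZ.hasLaw_apply hZm _).integral_sq_of_gaussianReal]

variable [IsFiniteMeasure P]

theorem integrable (hZ : IsGaussianVec P Z v) (hZm : Measurable Z) : Integrable Z P :=
  ((memLp_two_iff_integrable_sq_norm hZm.aestronglyMeasurable).2
    (hZ.integrable_norm_sq hZm)).integrable one_le_two

theorem integral_eq_zero (hZ : IsGaussianVec P Z v) (hZm : Measurable Z) :
    ∫ ω, Z ω ∂P = 0 := by
  ext i
  have h := (EuclideanSpace.proj (𝕜 := ℝ) i).integral_comp_comm (hZ.integrable hZm)
  simp only [PiLp.proj_apply] at h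
  simpa [← h] using (hZ.hasLaw_apply hZm i).integral_eq

theorem integral_inner_eq_zero (hZ : IsGaussianVec P Z v) (hZm : Measurable Z)
    {Y : Ω → EuclideanSpace ℝ (Fin p)} (hY : Integrable Y P) (hYZ : IndepFun Y Z P) :
    ∫ ω, inner ℝ (Z ω) (Y ω) ∂P = 0 :=
  calc ∫ ω, inner ℝ (Z ω) (Y ω) ∂P = innerSL ℝ (∫ ω, Z ω ∂P) (∫ ω, Y ω ∂P) :=
      hYZ.symm.integral_bilin (hZ.integrable hZm) hY (innerSL ℝ)
    _ = 0 := by simp [hZ.integral_eq_zero hZm]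

theorem integral_norm_sub_smul_sq (hZ : IsGaussianVec P Z v) (hZm : Measurable Z)
    {Y : Ω → EuclideanSpace ℝ (Fin p)} (hY : MemLp Y 2 P) (hYZ : IndepFun Y Z P) (η : ℝ) :
    ∫ ω, ‖Y ω - η • Z ω‖ ^ 2 ∂P = ∫ ω, ‖Y ω‖ ^ 2 ∂P + η ^ 2 * (p * v) := by
  have hY1 : Integrable Y P := hY.integrable one_le_two
  have hcross : Integrable (fun ω => inner ℝ (Z ω) (Y ω)) P :=
    hYZ.symm.integrable_bilin (hZ.integrable hZm) hY1 (innerSL ℝ)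
  have hY2 := hY.integrable_norm_pow two_ne_zero
  have hYcross : Integrable (fun ω => ‖Y ω‖ ^ 2 - 2 * η * inner ℝ (Z ω) (Y ω)) P :=
    hY2.sub (hcross.const_mul _)
  simp_rw [norm_sub_smul_sq]
  rw [integral_add hYcross ((hZ.integrable_norm_sq hZm).const_mul _),
    integral_sub hY2 (hcross.const_mul _),
    integral_const_mul, integral_const_mul, hZ.integral_inner_eq_zero hZm hY1 hYZ,
    hZ.integral_norm_sq hZm]
  ring

end IsGaussianVec

section Descent

variable {Ω E : Type*} [MeasurableSpace Ω] {P : Measure Ω}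
  [NormedAddCommGroup E] [InnerProductSpace ℝ E]

theorem integral_norm_sub_smul_sq_le {β ν η : ℝ} {W G : Ω → E} (hW : MemLp W 2 P)
    (hG : MemLp G 2 P) (hGW : Integrable (fun ω => inner ℝ (G ω) (W ω)) P)
    (hη : 0 ≤ η) (hηβ : η ≤ 1 / β) (hcoco : ∀ ω, 1 / β * ‖G ω‖ ^ 2 ≤ inner ℝ (G ω) (W ω))
    (hcurv : ν * ∫ ω, ‖W ω‖ ^ 2 ∂P ≤ ∫ ω, inner ℝ (G ω) (W ω) ∂P) :
    ∫ ω, ‖W ω - η • G ω‖ ^ 2 ∂P ≤ (1 - η * ν) * ∫ ω, ‖W ω‖ ^ 2 ∂P := by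
  have hW2 := hW.integrable_norm_pow two_ne_zero
  calc ∫ ω, ‖W ω - η • G ω‖ ^ 2 ∂P
      ≤ ∫ ω, ‖W ω‖ ^ 2 - η * inner ℝ (G ω) (W ω) ∂P :=
        integral_mono ((hW.sub (hG.const_smul η)).integrable_norm_pow two_ne_zero)
          (hW2.sub (hGW.const_mul η)) fun ω => norm_sub_smul_sq_le_of_inner_ge hη hηβ (hcoco ω)
    _ = ∫ ω, ‖W ω‖ ^ 2 ∂P - η * ∫ ω, inner ℝ (G ω) (W ω) ∂P := by
        rw [integral_sub hW2 (hGW.const_mul η), integral_const_mul]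
    _ ≤ (1 - η * ν) * ∫ ω, ‖W ω‖ ^ 2 ∂P := by
        linarith [mul_le_mul_of_nonneg_left hcurv hη]

end Descent

/-- one-step contraction of noisy gradient descent under the
expected-curvature condition:
`E‖x_{t+1} − x*‖² ≤ (1 − ην)·E‖x_t − x*‖² + pη²σ_t²`. -/
theorem noisy_gd_contraction
    {p : ℕ} (F : EuclideanSpace ℝ (Fin p) → ℝ)
    (F' : EuclideanSpace ℝ (Fin p) → EuclideanSpace ℝ (Fin p))
    (hdiff : ∀ x, HasGradientAt F (F' x) x)
    (β ν : ℝ)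
    (xstar : EuclideanSpace ℝ (Fin p))
    (hcoco : ∀ x : EuclideanSpace ℝ (Fin p),
      (inner ℝ (F' x) (x - xstar) : ℝ) ≥ (1 / β) * ‖F' x‖ ^ 2)
    {Ω : Type*} [MeasurableSpace Ω] (P : Measure Ω) [IsProbabilityMeasure P]
    (x z : ℕ → Ω → EuclideanSpace ℝ (Fin p))
    (σ : ℕ → ℝ)
    (η : ℝ) (hη : 0 < η) (hηβ : η ≤ 1 / β)
    (hx : ∀ t, Measurable (x t)) (hzmeas : ∀ t, Measurable (z t))
    (hgauss : ∀ t, IsGaussianVec P (z t) ⟨σ t ^ 2, by positivity⟩)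
    (hindep : ∀ t, IndepFun (x t) (z t) P)
    (hupdate : ∀ t ω, x (t + 1) ω = x t ω - η • (F' (x t ω) + z t ω))
    (hcurv : ∀ t, (∫ ω, (inner ℝ (F' (x t ω)) (x t ω - xstar) : ℝ) ∂P) ≥
      ν * ∫ ω, ‖x t ω - xstar‖ ^ 2 ∂P)
    (hint1 : ∀ t, Integrable (fun ω => ‖x t ω - xstar‖ ^ 2) P)
    (hint2 : ∀ t, Integrable (fun ω => ‖F' (x t ω)‖ ^ 2) P)
    (hint3 : ∀ t, Integrable
      (fun ω => (inner ℝ (F' (x t ω)) (x t ω - xstar) : ℝ)) P)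
    (t : ℕ) :
    (∫ ω, ‖x (t + 1) ω - xstar‖ ^ 2 ∂P) ≤
      (1 - η * ν) * (∫ ω, ‖x t ω - xstar‖ ^ 2 ∂P) + p * η ^ 2 * σ t ^ 2 := by
  have hF' : Measurable F' := by
    rw [show F' = ∇ F from funext fun y => (hdiff y).gradient.symm]
    exact measurable_gradient F
  have hW : MemLp (fun ω => x t ω - xstar) 2 P :=
    (memLp_two_iff_integrable_sq_norm ((hx t).sub_const xstar).aestronglyMeasurable).2 (hint1 t)
  have hG : MemLp (fun ω => F' (x t ω)) 2 P :=
    (memLp_two_iff_integrable_sq_norm (hF'.comp (hx t)).aestronglyMeasurable).2 (hint2 t)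
  have hY : MemLp (fun ω => x t ω - xstar - η • F' (x t ω)) 2 P := hW.sub (hG.const_smul η)
  have hind : IndepFun (fun ω => x t ω - xstar - η • F' (x t ω)) (z t) P :=
    (hindep t).comp ((measurable_id.sub_const xstar).sub (hF'.const_smul η)) measurable_id
  have hstep : ∀ ω, x (t + 1) ω - xstar = (x t ω - xstar - η • F' (x t ω)) - η • z t ω := by
    intro ω
    rw [hupdate, smul_add]
    abel
  have hdescent := integral_norm_sub_smul_sq_le hW hG (hint3 t) hη.le hηβ
    (fun ω => hcoco (x t ω)) (hcurv t)
  calc ∫ ω, ‖x (t + 1) ω - xstar‖ ^ 2 ∂P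
      = ∫ ω, ‖(x t ω - xstar - η • F' (x t ω)) - η • z t ω‖ ^ 2 ∂P := by simp_rw [hstep]
    _ = ∫ ω, ‖x t ω - xstar - η • F' (x t ω)‖ ^ 2 ∂P + η ^ 2 * (p * σ t ^ 2) :=
      (hgauss t).integral_norm_sub_smul_sq (hzmeas t) hY hind η
    _ ≤ (1 - η * ν) * (∫ ω, ‖x t ω - xstar‖ ^ 2 ∂P) + p * η ^ 2 * σ t ^ 2 := by
      linarith
end

section
/- Consider noisy gradient descent x_{t+1} = x_t − (1/β)(∇F(x_t) + z_t) on a convex β-smooth differentiable F: ℝ^p → ℝ, where z_t ∼ N(0, σ²I_p) is independent of x_t. Then for any minimizer x* of F and each step t, E[F(x_{t+1}) − F(x*)] ≤ (β/2)·(E[‖x_t − x*‖²] − E[‖x_{t+1} − x*‖²]) + (1/β)·p·σ². -/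
/-!
Smoothness bounds `F(x_{t+1})` by the linearisation at `x_t`, and convexity bounds `F(x_t) - F(x*)`
by `⟪∇F(x_t), x_t - x*⟫`. Since the step is `x_t - x_{t+1} = (∇F(x_t) + z_t)/β`, the three-point
identity turns the sum into the telescoping term `(β/2)(‖x_t - x*‖² - ‖x_{t+1} - x*‖²)`, plus a
cross term `⟪z_t, ∇F(x_t)/β - (x_t - x*)⟫` and `‖z_t‖²/β`. Independence of `z_t` from `x_t` and
`E z_t = 0` kill the cross term in expectation, and `E‖z_t‖² = pσ²`.
-/

open MeasureTheory ProbabilityTheory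
open scoped NNReal InnerProductSpace

section Smooth

variable {H : Type*} [NormedAddCommGroup H] [InnerProductSpace ℝ H]

theorem ConvexOn.inner_le_sub_of_hasGradientAt [CompleteSpace H] {F : H → ℝ} {g x : H}
    (hconv : ConvexOn ℝ Set.univ F) (hF : HasGradientAt F g x) (y : H) :
    ⟪g, y - x⟫_ℝ ≤ F y - F x := by
  have hline : HasDerivAt (fun s : ℝ => x + s • (y - x)) (y - x) 0 := by
    simpa using ((hasDerivAt_id (0 : ℝ)).smul_const (y - x)).const_add x
  have hφ : HasDerivAt (fun s : ℝ => F (x + s • (y - x))) ⟪g, y - x⟫_ℝ 0 := by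
    have hF0 : HasFDerivAt F (InnerProductSpace.toDual ℝ H g) (x + (0 : ℝ) • (y - x)) := by
      simpa using hF.hasFDerivAt
    exact hF0.comp_hasDerivAt 0 hline
  have hφconv : ConvexOn ℝ Set.univ fun s : ℝ => F (x + s • (y - x)) := by
    simpa [Function.comp_def, AffineMap.lineMap_apply_module', add_comm] using
      hconv.comp_affineMap (AffineMap.lineMap x y)
  simpa [slope_def_field] using
    hφconv.le_slope_of_hasDerivAt (Set.mem_univ 0) (Set.mem_univ 1) one_pos hφ

theorem measurable_of_hasGradientAt [CompleteSpace H] [MeasurableSpace H] [BorelSpace H]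
    {F : H → ℝ} {F' : H → H} (hF : ∀ x, HasGradientAt F (F' x) x) : Measurable F' := by
  have hF' : F' = fun x => (InnerProductSpace.toDual ℝ H).symm (fderiv ℝ F x) := by
    funext x
    rw [(hF x).hasFDerivAt.fderiv, LinearIsometryEquiv.symm_apply_apply]
  rw [hF']
  borelize (H →L[ℝ] ℝ)
  exact (InnerProductSpace.toDual ℝ H).symm.continuous.measurable.comp (measurable_fderiv ℝ F)

variable {F : H → ℝ} {F' : H → H} {β : ℝ}

theorem sq_norm_le_of_smooth (hβ : 0 < β)
    (hsmooth : ∀ x y, F y ≤ F x + ⟪F' x, y - x⟫_ℝ + β / 2 * ‖y - x‖ ^ 2)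
    {xstar : H} (hmin : ∀ y, F xstar ≤ F y) (y : H) :
    ‖F' y‖ ^ 2 ≤ 2 * β * (F y - F xstar) := by
  have hstep := hsmooth y (y - β⁻¹ • F' y)
  have hmin' := hmin (y - β⁻¹ • F' y)
  rw [sub_sub_cancel_left, inner_neg_right, real_inner_smul_right, real_inner_self_eq_norm_sq,
    norm_neg, norm_smul, mul_pow, Real.norm_eq_abs, sq_abs] at hstep
  have hdecrease : β⁻¹ * ‖F' y‖ ^ 2 ≤ 2 * (F y - F xstar) := by
    have hquad : β / 2 * (β⁻¹ ^ 2 * ‖F' y‖ ^ 2) = β⁻¹ / 2 * ‖F' y‖ ^ 2 := by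
      field_simp
    linarith
  calc ‖F' y‖ ^ 2 = β * (β⁻¹ * ‖F' y‖ ^ 2) := by field_simp
    _ ≤ β * (2 * (F y - F xstar)) := by gcongr
    _ = 2 * β * (F y - F xstar) := by ring

theorem noisy_gradient_step_le (hβ : 0 < β)
    (hsmooth : ∀ x y, F y ≤ F x + ⟪F' x, y - x⟫_ℝ + β / 2 * ‖y - x‖ ^ 2)
    (hgrad : ∀ x y, ⟪F' x, y - x⟫_ℝ ≤ F y - F x) (xstar X w : H) :
    F (X - (1 / β) • (F' X + w)) - F xstar ≤
      β / 2 * (‖X - xstar‖ ^ 2 - ‖X - (1 / β) • (F' X + w) - xstar‖ ^ 2)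
        + ⟪w, (1 / β) • F' X - (X - xstar)⟫_ℝ + 1 / β * ‖w‖ ^ 2 := by
  have hdesc := hsmooth X (X - (1 / β) • (F' X + w))
  have hconv := hgrad X xstar
  rw [sub_sub_cancel_left] at hdesc
  rw [← neg_sub X xstar, inner_neg_right] at hconv
  rw [show X - (1 / β) • (F' X + w) - xstar = (X - xstar) - (1 / β) • (F' X + w) by abel]
  set a := X - xstar
  set g := F' X
  simp only [inner_neg_right, inner_sub_right, inner_smul_right, inner_add_right, norm_neg,
    norm_sub_sq_real, norm_add_sq_real, norm_smul, mul_pow, Real.norm_eq_abs, sq_abs,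
    real_inner_self_eq_norm_sq] at hdesc ⊢
  have three_point : β / 2 * (‖a‖ ^ 2 - (‖a‖ ^ 2 - 2 * (1 / β * (⟪a, g⟫_ℝ + ⟪a, w⟫_ℝ))
        + (1 / β) ^ 2 * (‖g‖ ^ 2 + 2 * ⟪g, w⟫_ℝ + ‖w‖ ^ 2)))
        + (1 / β * ⟪w, g⟫_ℝ - ⟪w, a⟫_ℝ) + 1 / β * ‖w‖ ^ 2
      = ⟪g, a⟫_ℝ - 1 / β * (‖g‖ ^ 2 + ⟪g, w⟫_ℝ)
        + β / 2 * ((1 / β) ^ 2 * (‖g‖ ^ 2 + 2 * ⟪g, w⟫_ℝ + ‖w‖ ^ 2)) := by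
    rw [real_inner_comm w g, real_inner_comm w a, real_inner_comm a g]
    field_simp
    ring
  linarith

end Smooth

namespace ProbabilityTheory

variable {Ω E : Type*} [MeasurableSpace Ω] {μ : Measure Ω}
  [NormedAddCommGroup E] [InnerProductSpace ℝ E] [MeasurableSpace E] [BorelSpace E]
  {X Y : Ω → E}

theorem IndepFun.integrable_inner (h : IndepFun X Y μ) (hX : Integrable X μ)
    (hY : Integrable Y μ) : Integrable (fun ω => ⟪X ω, Y ω⟫_ℝ) μ :=
  h.integrable_bilin hX hY (innerSL ℝ)

theorem IndepFun.integral_inner [CompleteSpace E] (h : IndepFun X Y μ) (hX : Integrable X μ)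
    (hY : Integrable Y μ) : ∫ ω, ⟪X ω, Y ω⟫_ℝ ∂μ = ⟪μ[X], μ[Y]⟫_ℝ :=
  h.integral_bilin hX hY (innerSL ℝ)

end ProbabilityTheory

theorem integral_sq_gaussianReal_zero (v : ℝ≥0) : ∫ x, x ^ 2 ∂gaussianReal 0 v = v := by
  rw [← variance_of_integral_eq_zero aemeasurable_id' integral_id_gaussianReal,
    variance_fun_id_gaussianReal]

section GaussianCoordinates

variable {ι Ω : Type*} [MeasurableSpace Ω] {P : Measure Ω} {z : Ω → EuclideanSpace ℝ ι}
  {v : ℝ≥0} (hz : Measurable z) (hlaw : ∀ i, P.map (fun ω => z ω i) = gaussianReal 0 v)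
include hz hlaw

theorem integral_comp_eval_of_map_eval_eq_gaussianReal {f : ℝ → ℝ} (hf : Measurable f) (i : ι) :
    ∫ ω, f (z ω i) ∂P = ∫ x, f x ∂gaussianReal 0 v := by
  rw [← hlaw i, integral_map (by fun_prop) hf.aestronglyMeasurable]

variable [Fintype ι]

theorem memLp_of_map_eval_eq_gaussianReal (p : ℝ≥0) : MemLp z p P := by
  refine memLp_piLp_iff.2 fun i => ?_
  have hcoord := memLp_id_gaussianReal (μ := 0) (v := v) p
  rw [← hlaw i] at hcoord
  exact (memLp_map_measure_iff aestronglyMeasurable_id (by fun_prop)).1 hcoord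

theorem integral_eq_zero_of_map_eval_eq_gaussianReal : ∫ ω, z ω ∂P = 0 := by
  have hint : Integrable z P :=
    memLp_one_iff_integrable.1 (by simpa using memLp_of_map_eval_eq_gaussianReal hz hlaw 1)
  ext i
  rw [eval_integral_piLp (integrable_piLp_iff.1 hint) i, PiLp.zero_apply,
    integral_comp_eval_of_map_eval_eq_gaussianReal hz hlaw (f := fun x => x) measurable_id,
    integral_id_gaussianReal]

theorem integral_sq_norm_of_map_eval_eq_gaussianReal :
    ∫ ω, ‖z ω‖ ^ 2 ∂P = Fintype.card ι * v := by
  have hL2 := memLp_of_map_eval_eq_gaussianReal hz hlaw 2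
  simp_rw [EuclideanSpace.norm_sq_eq, Real.norm_eq_abs, sq_abs]
  rw [integral_finsetSum _ fun i _ => (memLp_piLp_iff.1 hL2 i).integrable_sq]
  simp [integral_comp_eval_of_map_eval_eq_gaussianReal hz hlaw (f := fun x => x ^ 2) (by fun_prop),
    integral_sq_gaussianReal_zero]

end GaussianCoordinates

section NoisyStep

variable {H Ω : Type*} [NormedAddCommGroup H] [InnerProductSpace ℝ H] [SecondCountableTopology H]
  [MeasurableSpace H] [BorelSpace H] [MeasurableSpace Ω] {P : Measure Ω} [IsFiniteMeasure P]
  {F : H → ℝ} {F' : H → H} {β : ℝ} {xstar : H} {X : Ω → H}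

theorem memLp_two_comp_gradient_of_smooth (hβ : 0 < β)
    (hsmooth : ∀ x y, F y ≤ F x + ⟪F' x, y - x⟫_ℝ + β / 2 * ‖y - x‖ ^ 2)
    (hmin : ∀ y, F xstar ≤ F y) (hF' : Measurable F') (hX : Measurable X)
    (hFX : Integrable (fun ω => F (X ω)) P) : MemLp (fun ω => F' (X ω)) 2 P := by
  refine (memLp_two_iff_integrable_sq_norm (hF'.comp hX).aestronglyMeasurable).2 ?_
  refine ((hFX.sub (integrable_const (F xstar))).const_mul (2 * β)).mono'
    ((hF'.comp hX).norm.pow_const 2).aestronglyMeasurable (ae_of_all _ fun ω => ?_)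
  simpa using sq_norm_le_of_smooth hβ hsmooth hmin (X ω)

theorem integral_noisy_gradient_step_le [CompleteSpace H] {Xnext w : Ω → H}
    (hdiff : ∀ x, HasGradientAt F (F' x) x) (hconv : ConvexOn ℝ Set.univ F) (hβ : 0 < β)
    (hsmooth : ∀ x y, F y ≤ F x + ⟪F' x, y - x⟫_ℝ + β / 2 * ‖y - x‖ ^ 2)
    (hmin : ∀ y, F xstar ≤ F y) (hX : Measurable X) (hindep : IndepFun X w P)
    (hw : MemLp w 2 P) (hw0 : ∫ ω, w ω ∂P = 0)
    (hnext : ∀ ω, Xnext ω = X ω - (1 / β) • (F' (X ω) + w ω))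
    (hdist : Integrable (fun ω => ‖X ω - xstar‖ ^ 2) P)
    (hdistnext : Integrable (fun ω => ‖Xnext ω - xstar‖ ^ 2) P)
    (hFX : Integrable (fun ω => F (X ω)) P) (hFnext : Integrable (fun ω => F (Xnext ω)) P) :
    ∫ ω, (F (Xnext ω) - F xstar) ∂P ≤
      β / 2 * ((∫ ω, ‖X ω - xstar‖ ^ 2 ∂P) - ∫ ω, ‖Xnext ω - xstar‖ ^ 2 ∂P)
        + 1 / β * ∫ ω, ‖w ω‖ ^ 2 ∂P := by
  have hF' := measurable_of_hasGradientAt hdiff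
  set Y : Ω → H := fun ω => (1 / β) • F' (X ω) - (X ω - xstar)
  have hYint : Integrable Y P :=
    (((memLp_two_comp_gradient_of_smooth hβ hsmooth hmin hF' hX hFX).const_smul (1 / β)).sub
      ((memLp_two_iff_integrable_sq_norm (hX.sub_const xstar).aestronglyMeasurable).2
        hdist)).integrable one_le_two
  have hwY : IndepFun w Y P :=
    hindep.symm.comp (φ := id) (ψ := fun y => (1 / β) • F' y - (y - xstar))
      measurable_id ((hF'.const_smul _).sub (measurable_id.sub_const _))
  have hcrossint := hwY.integrable_inner (hw.integrable one_le_two) hYint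
  have hcross : ∫ ω, ⟪w ω, Y ω⟫_ℝ ∂P = 0 := by
    rw [hwY.integral_inner (hw.integrable one_le_two) hYint, hw0, inner_zero_left]
  have hdistdiff : Integrable
      (fun ω => β / 2 * (‖X ω - xstar‖ ^ 2 - ‖Xnext ω - xstar‖ ^ 2)) P :=
    (hdist.sub hdistnext).const_mul (β / 2)
  have hdistcross : Integrable (fun ω => β / 2 * (‖X ω - xstar‖ ^ 2 - ‖Xnext ω - xstar‖ ^ 2)
      + ⟪w ω, Y ω⟫_ℝ) P :=
    hdistdiff.add hcrossint
  have hnoise : Integrable (fun ω => 1 / β * ‖w ω‖ ^ 2) P :=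
    ((memLp_two_iff_integrable_sq_norm hw.1).1 hw).const_mul (1 / β)
  calc ∫ ω, (F (Xnext ω) - F xstar) ∂P
      ≤ ∫ ω, (β / 2 * (‖X ω - xstar‖ ^ 2 - ‖Xnext ω - xstar‖ ^ 2)
          + ⟪w ω, Y ω⟫_ℝ + 1 / β * ‖w ω‖ ^ 2) ∂P := by
        refine integral_mono (hFnext.sub (integrable_const _))
          (hdistcross.add hnoise) fun ω => ?_
        rw [hnext ω]
        exact noisy_gradient_step_le hβ hsmooth
          (fun x => hconv.inner_le_sub_of_hasGradientAt (hdiff x)) xstar (X ω) (w ω)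
    _ = _ := by
      rw [integral_add hdistcross hnoise, integral_add hdistdiff hcrossint,
        hcross, integral_const_mul, integral_const_mul, integral_sub hdist hdistnext]
      ring

end NoisyStep

/-- per-step descent inequality for noisy gradient descent with
step size `1/β` on a convex β-smooth function:
`E[F(x_{t+1}) − F(x*)] ≤ (β/2)(E‖x_t−x*‖² − E‖x_{t+1}−x*‖²) + pσ²/β`. -/
theorem noisy_gd_per_step_descent
    {p : ℕ} (F : EuclideanSpace ℝ (Fin p) → ℝ)
    (F' : EuclideanSpace ℝ (Fin p) → EuclideanSpace ℝ (Fin p))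
    (hdiff : ∀ x, HasGradientAt F (F' x) x)
    (hconv : ConvexOn ℝ Set.univ F)
    (β : ℝ) (hβ : 0 < β)
    (hsmooth : ∀ x y : EuclideanSpace ℝ (Fin p),
      F y ≤ F x + (inner ℝ (F' x) (y - x) : ℝ) + β / 2 * ‖y - x‖ ^ 2)
    (xstar : EuclideanSpace ℝ (Fin p)) (hmin : ∀ y, F xstar ≤ F y)
    {Ω : Type*} [MeasurableSpace Ω] (P : Measure Ω) [IsProbabilityMeasure P]
    (x z : ℕ → Ω → EuclideanSpace ℝ (Fin p))
    (σ : ℝ)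
    (hx : ∀ t, Measurable (x t)) (hzmeas : ∀ t, Measurable (z t))
    (hgauss : ∀ t, IsGaussianVec P (z t) ⟨σ ^ 2, by positivity⟩)
    (hindep : ∀ t, IndepFun (x t) (z t) P)
    (hupdate : ∀ t ω, x (t + 1) ω = x t ω - (1 / β) • (F' (x t ω) + z t ω))
    (hint1 : ∀ t, Integrable (fun ω => ‖x t ω - xstar‖ ^ 2) P)
    (hint2 : ∀ t, Integrable (fun ω => F (x t ω)) P)
    (t : ℕ) :
    (∫ ω, (F (x (t + 1) ω) - F xstar) ∂P) ≤
      β / 2 * ((∫ ω, ‖x t ω - xstar‖ ^ 2 ∂P) - ∫ ω, ‖x (t + 1) ω - xstar‖ ^ 2 ∂P)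
        + (1 / β) * p * σ ^ 2 := by
  have hzL2 := memLp_of_map_eval_eq_gaussianReal (hzmeas t) (hgauss t).1 2
  have hnoise : ∫ ω, ‖z t ω‖ ^ 2 ∂P = p * σ ^ 2 := by
    rw [integral_sq_norm_of_map_eval_eq_gaussianReal (hzmeas t) (hgauss t).1, Fintype.card_fin]
    rfl
  calc (∫ ω, (F (x (t + 1) ω) - F xstar) ∂P)
      ≤ β / 2 * ((∫ ω, ‖x t ω - xstar‖ ^ 2 ∂P) - ∫ ω, ‖x (t + 1) ω - xstar‖ ^ 2 ∂P)
        + 1 / β * ∫ ω, ‖z t ω‖ ^ 2 ∂P :=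
      integral_noisy_gradient_step_le hdiff hconv hβ hsmooth hmin (hx t) (hindep t) hzL2
        (integral_eq_zero_of_map_eval_eq_gaussianReal (hzmeas t) (hgauss t).1) (hupdate t)
        (hint1 t) (hint1 (t + 1)) (hint2 t) (hint2 (t + 1))
    _ = _ := by rw [hnoise]; ring
end
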